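/- For the periodic chain of length l, let H_d(x) = (1/2) Σ_{j=1}^l x_j², H_a(x) = (a/2) Σ_{j=1}^l (x_{j+1} − x_j)² (indices mod l), H_1(x) = (1/4) Σ_{j=1}^l x_j⁴, and Z_l(β,a) := ∫_{ℝ^l} e^{−β(H_d + H_a + H_1)} dx. Then for every a > 0 and β > 0, (1+4a)^{−l/2} Z_l(β,0) ≤ Z_l(β,a) ≤ Z_l(β,0). -/

import Mathlib

/-!
Since `(u - v)² ≤ 2u² + 2v²` and the shift permutes the sites, `0 ≤ H_a ≤ 4a H_d`. The upper
bound is then immediate, and for the lower one `Z_l(β,a) ≥ ∫ e^{−β((1+4a)H_d + H_1)}`. The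
substitution `x = c y`, `c = (1+4a)^{−1/2}`, turns `(1+4a)H_d + H_1` into `H_d + c⁴H_1` at the
cost of the Jacobian `c^l`, and `c⁴ ≤ 1` gives back `Z_l(β,0)`.
-/

open MeasureTheory

/-- On-site harmonic part `H_d(x) = (1/2) Σ_j x_j²` of the chain of length `l`. -/
noncomputable def Hd (l : ℕ) (x : Fin l → ℝ) : ℝ := (1 / 2) * ∑ j, x j ^ 2

/-- Coupling part `H_a(x) = (a/2) Σ_j (x_{j+1} − x_j)²` with periodic indices. -/
noncomputable def Ha (l : ℕ) (a : ℝ) (x : Fin l → ℝ) : ℝ :=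
  (a / 2) * ∑ j, (x (finRotate l j) - x j) ^ 2

/-- Quartic part `H_1(x) = (1/4) Σ_j x_j⁴`. -/
noncomputable def H1 (l : ℕ) (x : Fin l → ℝ) : ℝ := (1 / 4) * ∑ j, x j ^ 4

/-- Configuration partition function `Z_l(β,a) = ∫ e^{−β(H_d + H_a + H_1)}`. -/
noncomputable def Zl (l : ℕ) (β a : ℝ) : ℝ :=
  ∫ x : Fin l → ℝ, Real.exp (-β * (Hd l x + Ha l a x + H1 l x))

lemma sum_sub_sq_comp_perm_le {ι : Type*} [Fintype ι] (σ : Equiv.Perm ι) (x : ι → ℝ) :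
    ∑ j, (x (σ j) - x j) ^ 2 ≤ 4 * ∑ j, x j ^ 2 :=
  calc ∑ j, (x (σ j) - x j) ^ 2
      ≤ ∑ j, (2 * x (σ j) ^ 2 + 2 * x j ^ 2) :=
        Finset.sum_le_sum fun j _ => by nlinarith [sq_nonneg (x (σ j) + x j)]
    _ = 4 * ∑ j, x j ^ 2 := by
        rw [Finset.sum_add_distrib, ← Finset.mul_sum, ← Finset.mul_sum,
          Equiv.sum_comp σ fun j => x j ^ 2]
        ring

section Chain

variable {l : ℕ}

lemma H1_nonneg (x : Fin l → ℝ) : 0 ≤ H1 l x := by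
  unfold H1; positivity

lemma Ha_nonneg {a : ℝ} (ha : 0 ≤ a) (x : Fin l → ℝ) : 0 ≤ Ha l a x := by
  unfold Ha; positivity

lemma Ha_zero (x : Fin l → ℝ) : Ha l 0 x = 0 := by
  simp [Ha]

lemma Ha_le_four_mul_Hd {a : ℝ} (ha : 0 ≤ a) (x : Fin l → ℝ) : Ha l a x ≤ 4 * a * Hd l x := by
  have h := mul_le_mul_of_nonneg_left (sum_sub_sq_comp_perm_le (finRotate l) x)
    (div_nonneg ha zero_le_two)
  unfold Ha Hd
  linarith

lemma Hd_smul (c : ℝ) (x : Fin l → ℝ) : Hd l (c • x) = c ^ 2 * Hd l x := by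
  simp only [Hd, Pi.smul_apply, smul_eq_mul, mul_pow, ← Finset.mul_sum]
  ring

lemma H1_smul (c : ℝ) (x : Fin l → ℝ) : H1 l (c • x) = c ^ 4 * H1 l x := by
  simp only [H1, Pi.smul_apply, smul_eq_mul, mul_pow, ← Finset.mul_sum]
  ring

@[fun_prop]
lemma continuous_Hd : Continuous (Hd l) := by
  unfold Hd; fun_prop

@[fun_prop]
lemma continuous_Ha (a : ℝ) : Continuous (Ha l a) := by
  unfold Ha; fun_prop

@[fun_prop]
lemma continuous_H1 : Continuous (H1 l) := by
  unfold H1; fun_prop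

lemma exp_neg_mul_Hd_eq_prod (β : ℝ) (x : Fin l → ℝ) :
    Real.exp (-β * Hd l x) = ∏ j, Real.exp (-(β / 2) * x j ^ 2) := by
  rw [← Real.exp_sum, Hd, Finset.mul_sum, Finset.mul_sum]
  exact congrArg Real.exp (Finset.sum_congr rfl fun j _ => by ring)

lemma integrable_exp_neg_mul_of_Hd_le {β : ℝ} (hβ : 0 < β) {F : (Fin l → ℝ) → ℝ}
    (hF : Continuous F) (hHd : ∀ x, Hd l x ≤ F x) :
    Integrable fun x => Real.exp (-β * F x) := by
  have hgauss : Integrable fun x : Fin l → ℝ => Real.exp (-β * Hd l x) := by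
    simp only [exp_neg_mul_Hd_eq_prod]
    exact Integrable.fintype_prod fun _ => integrable_exp_neg_mul_sq (half_pos hβ)
  refine hgauss.mono' (by fun_prop) (Filter.Eventually.of_forall fun x => ?_)
  rw [Real.norm_of_nonneg (Real.exp_pos _).le, Real.exp_le_exp]
  nlinarith [hHd x]

lemma integral_exp_neg_mul_le {β : ℝ} (hβ : 0 < β) {F G : (Fin l → ℝ) → ℝ}
    (hF : Continuous F) (hHd : ∀ x, Hd l x ≤ F x) (hFG : ∀ x, F x ≤ G x) :
    ∫ x, Real.exp (-β * G x) ≤ ∫ x, Real.exp (-β * F x) :=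
  integral_mono_of_nonneg (Filter.Eventually.of_forall fun _ => (Real.exp_pos _).le)
    (integrable_exp_neg_mul_of_Hd_le hβ hF hHd)
    (Filter.Eventually.of_forall fun x => Real.exp_le_exp.2 (by nlinarith [hFG x]))

lemma integral_exp_neg_mul_inv_sq_mul_Hd_add_H1 {c : ℝ} (hc : 0 < c) (β : ℝ) :
    ∫ x, Real.exp (-β * ((c ^ 2)⁻¹ * Hd l x + H1 l x)) =
      c ^ l * ∫ y, Real.exp (-β * (Hd l y + c ^ 4 * H1 l y)) := by
  have h := Measure.integral_comp_smul (volume : Measure (Fin l → ℝ))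
    (fun x => Real.exp (-β * ((c ^ 2)⁻¹ * Hd l x + H1 l x))) c
  simp only [Hd_smul, H1_smul, inv_mul_cancel_left₀ (pow_ne_zero 2 hc.ne'),
    Module.finrank_fin_fun, smul_eq_mul, abs_of_pos (inv_pos.2 (pow_pos hc l))] at h
  rw [h, mul_inv_cancel_left₀ (pow_ne_zero l hc.ne')]

lemma Zl_zero (β : ℝ) : Zl l β 0 = ∫ x, Real.exp (-β * (Hd l x + H1 l x)) := by
  simp only [Zl, Ha_zero, add_zero]

lemma Zl_le_Zl_zero {a β : ℝ} (ha : 0 ≤ a) (hβ : 0 < β) : Zl l β a ≤ Zl l β 0 := by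
  rw [Zl_zero]
  exact integral_exp_neg_mul_le hβ (F := fun x => Hd l x + H1 l x) (by fun_prop)
    (fun x => by nlinarith [H1_nonneg x]) fun x => by nlinarith [Ha_nonneg ha x]

lemma pow_mul_Zl_zero_le_Zl {a β c : ℝ} (ha : 0 ≤ a) (hβ : 0 < β) (hc : 0 < c)
    (hca : (c ^ 2)⁻¹ = 1 + 4 * a) : c ^ l * Zl l β 0 ≤ Zl l β a := by
  have hc4 : c ^ 4 ≤ 1 := by
    have : c ^ 2 ≤ 1 := by
      rw [← inv_inv (c ^ 2), hca]
      exact inv_le_one_of_one_le₀ (by linarith)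
    nlinarith [sq_nonneg c]
  calc c ^ l * Zl l β 0
      ≤ c ^ l * ∫ y, Real.exp (-β * (Hd l y + c ^ 4 * H1 l y)) := by
        rw [Zl_zero]
        refine mul_le_mul_of_nonneg_left ?_ (pow_nonneg hc.le l)
        exact integral_exp_neg_mul_le hβ (F := fun x => Hd l x + c ^ 4 * H1 l x) (by fun_prop)
          (fun x => by nlinarith [mul_nonneg (pow_nonneg hc.le 4) (H1_nonneg x)])
          fun x => by nlinarith [H1_nonneg x]
    _ = ∫ x, Real.exp (-β * ((1 + 4 * a) * Hd l x + H1 l x)) := by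
        rw [← hca, integral_exp_neg_mul_inv_sq_mul_Hd_add_H1 hc β]
    _ ≤ Zl l β a :=
        integral_exp_neg_mul_le hβ (F := fun x => Hd l x + Ha l a x + H1 l x)
          (by fun_prop) (fun x => by nlinarith [H1_nonneg x, Ha_nonneg ha x])
          fun x => by nlinarith [Ha_le_four_mul_Hd ha x]

end Chain

/-- for every `a > 0` and `β > 0`,
`(1+4a)^{−l/2} Z_l(β,0) ≤ Z_l(β,a) ≤ Z_l(β,0)`. -/
theorem stmt17 (l : ℕ) (a β : ℝ) (ha : 0 < a) (hβ : 0 < β) :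
    (1 + 4 * a) ^ (-(l : ℝ) / 2) * Zl l β 0 ≤ Zl l β a ∧ Zl l β a ≤ Zl l β 0 := by
  have hs : 0 < 1 + 4 * a := by linarith
  set c := (1 + 4 * a) ^ (-(1 : ℝ) / 2) with hc
  have hc_pow (n : ℕ) : c ^ n = (1 + 4 * a) ^ (-(n : ℝ) / 2) := by
    rw [hc, ← Real.rpow_natCast, ← Real.rpow_mul hs.le]
    ring_nf
  have hc_sq : (c ^ 2)⁻¹ = 1 + 4 * a := by
    rw [hc_pow, ← Real.rpow_neg_one, ← Real.rpow_mul hs.le]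
    norm_num
  rw [← hc_pow]
  exact ⟨pow_mul_Zl_zero_le_Zl ha.le hβ (Real.rpow_pos_of_pos hs _) hc_sq, Zl_le_Zl_zero ha.le hβ⟩
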